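/- arXiv:1505.07346 — 5 statements merged into one kernel-verified Lean document; each statement's English description precedes it below -/
import Mathlib

section
/- Let G be a finite cyclic group generated by γ of order n invertible in k, acting γ-abelianly on a Lie algebra h (i.e., [g ▷ z, g' ▷ z'] = 0 for all g ≠ g' in G and z, z' ∈ h_γ := {y - γ ▷ y | y ∈ h}). Then the cocycle θ(x, y) := n⁻¹ Σ_{i=0}^{n-1} [γ^i ▷ x, γ^i ▷ y] vanishes for all x, y ∈ h_γ. -/
/-! Summing `g ▷ (γ ▷ w)` over the whole group gives the same as summing `g ▷ w`, so every element
`y` of `h_γ` has zero orbit sum `∑ g, g ▷ y`. For `x, y ∈ h_γ` and fixed `g`, γ-abelianness kills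
all but one term of `⁅g ▷ x, ∑ g', g' ▷ y⁆ = 0`, hence `⁅g ▷ x, g ▷ y⁆ = 0`: each term of the
cocycle vanishes before summing. -/

open Finset

theorem sum_apply_sub_apply_eq_zero {R M G : Type*} [Semiring R] [AddCommGroup M] [Module R M]
    [Group G] [Fintype G] (φ : G →* (M ≃ₗ[R] M)) (γ : G) (w : M) :
    ∑ g, φ g (w - φ γ w) = 0 := by
  have h_shift : ∑ g, φ g (φ γ w) = ∑ g, φ g w := by
    simpa only [Equiv.coe_mulRight, map_mul, LinearEquiv.mul_apply] using
      Equiv.sum_comp (Equiv.mulRight γ) (fun g => φ g w)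
  simp only [map_sub, sum_sub_distrib, h_shift, sub_self]

theorem lie_eq_zero_of_sum_eq_zero {ι L M : Type*} [LieRing L] [AddCommGroup M]
    [LieRingModule L M] [Fintype ι] (a : L) (f : ι → M) (hf : ∑ j, f j = 0) (i : ι)
    (hne : ∀ j ≠ i, ⁅a, f j⁆ = 0) : ⁅a, f i⁆ = 0 := by
  rw [← sum_eq_single_of_mem i (mem_univ i) fun j _ hj => hne j hj, ← lie_sum, hf, lie_zero]

theorem stmt8_general (k : Type*) [Field k] (h : Type*) [LieRing h] [LieAlgebra k h]
    (G : Type*) [Group G] [Fintype G] (γ : G) (n : ℕ)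
    (φ : G →* (h ≃ₗ[k] h))
    (hab : ∀ g g' : G, g ≠ g' →
      ∀ z z' : h, (∃ y : h, z = y - φ γ y) → (∃ y : h, z' = y - φ γ y) →
        ⁅φ g z, φ g' z'⁆ = 0) :
    ∀ x y : h, (∃ w : h, x = w - φ γ w) → (∃ w : h, y = w - φ γ w) →
      (n : k)⁻¹ • ∑ i ∈ Finset.range n, ⁅φ (γ ^ i) x, φ (γ ^ i) y⁆ = 0 := by
  rintro x y hx ⟨w, rfl⟩
  refine smul_eq_zero_of_right _ (sum_eq_zero fun i _ => ?_)
  exact lie_eq_zero_of_sum_eq_zero (φ (γ ^ i) x) (fun g => φ g (w - φ γ w))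
    (sum_apply_sub_apply_eq_zero φ γ w) (γ ^ i) fun g hg => hab _ _ hg.symm _ _ hx ⟨w, rfl⟩

/-- for a γ-abelian action of a cyclic group `G = ⟨γ⟩` of order `n`
invertible in `k`, the cocycle `θ(x,y) = n⁻¹ Σ_i [γ^i ▷ x, γ^i ▷ y]` vanishes on
`h_γ = {y - γ ▷ y | y ∈ h}`. -/
theorem stmt8 (k : Type*) [Field k] (h : Type*) [LieRing h] [LieAlgebra k h]
    (G : Type*) [Group G] [Fintype G] (γ : G) (n : ℕ)
    (hgen : ∀ x : G, x ∈ Subgroup.zpowers γ) (hord : orderOf γ = n)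
    (hn : IsUnit ((n : k)))
    (φ : G →* (h ≃ₗ[k] h))
    (hLie : ∀ g : G, ∀ x y : h, φ g ⁅x, y⁆ = ⁅φ g x, φ g y⁆)
    (hab : ∀ g g' : G, g ≠ g' →
      ∀ z z' : h, (∃ y : h, z = y - φ γ y) → (∃ y : h, z' = y - φ γ y) →
        ⁅φ g z, φ g' z'⁆ = 0) :
    ∀ x y : h, (∃ w : h, x = w - φ γ w) → (∃ w : h, y = w - φ γ w) →
      (n : k)⁻¹ • ∑ i ∈ Finset.range n, ⁅φ (γ ^ i) x, φ (γ ^ i) y⁆ = 0 :=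
  stmt8_general k h G γ n φ hab
end

section
/- Let G be a finite cyclic group generated by γ of order n invertible in k, acting γ-abelianly on a Lie algebra h. Then the map φ: h^G ⋊ h_γ → h, φ(g, x) := g + x is an isomorphism of Lie algebras, where h^G ⋊ h_γ is the semidirect product associated to the right action x ⇀ g := [x, g] of h^G on h_γ. -/
/-!
Averaging over `G` is a projection of `h` onto `h^G` (as `|G|` is invertible) whose kernel is
spanned by the vectors `x - g x`; since `G` is generated by `γ`, that span is `h_γ`, so
`h = h^G ⊕ h_γ`. As `G` acts by Lie automorphisms, `h^G` is a subalgebra and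
`[h_γ, h^G] ⊆ h_γ`. For `x, y ∈ h_γ`, γ-abelianity kills every term but `g = 1` of
`[∑ g, g x, y]`, hence `[x, y] = -[y, ∑ g, g x]` also lies in `h_γ`.
-/

namespace Representation

variable {k G V : Type*} [CommRing k] [Group G] [AddCommGroup V] [Module k V]
  (ρ : Representation k G V)

lemma FiniteCyclicGroup.range_id_sub_eq_coinvariantsKer [Finite G] (g : G)
    (hg : ∀ x, x ∈ Subgroup.zpowers g) :
    LinearMap.range (LinearMap.id - ρ g) = Coinvariants.ker ρ := by
  rw [FiniteCyclicGroup.coinvariantsKer_eq_range ρ g hg, ← LinearMap.range_neg, neg_sub]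

section Average

variable [Fintype G] [Invertible (Fintype.card G : k)]

lemma averageMap_comp_self (g : G) : averageMap ρ ∘ₗ ρ g = averageMap ρ := by
  rw [averageMap, ← asAlgebraHom_single_one, ← Module.End.mul_eq_comp, ← map_mul,
    GroupAlgebra.mul_average_right]

lemma mk_averageMap_apply (x : V) :
    Coinvariants.mk ρ (averageMap ρ x) = Coinvariants.mk ρ x := by
  simp [GroupAlgebra.average, map_sum, Finset.card_univ, ← Nat.cast_smul_eq_nsmul k, smul_smul]

lemma ker_averageMap : LinearMap.ker (averageMap ρ) = Coinvariants.ker ρ := by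
  refine le_antisymm (fun x hx => ?_) (Submodule.span_le.2 ?_)
  · rw [← Coinvariants.mk_eq_zero, ← mk_averageMap_apply, LinearMap.mem_ker.1 hx, map_zero]
  · rintro _ ⟨⟨g, x⟩, rfl⟩
    rw [SetLike.mem_coe, LinearMap.mem_ker, map_sub, ← LinearMap.comp_apply,
      averageMap_comp_self, sub_self]

theorem isCompl_invariants_coinvariantsKer : IsCompl ρ.invariants (Coinvariants.ker ρ) :=
  ker_averageMap ρ ▸ ρ.isProj_averageMap.isCompl

theorem FiniteCyclicGroup.isCompl_invariants_range_id_sub (g : G)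
    (hg : ∀ x, x ∈ Subgroup.zpowers g) :
    IsCompl ρ.invariants (LinearMap.range (LinearMap.id - ρ g)) :=
  range_id_sub_eq_coinvariantsKer ρ g hg ▸ isCompl_invariants_coinvariantsKer ρ

end Average

end Representation

namespace LinearMap

variable {k L : Type*} [CommRing k] [LieRing L] [LieAlgebra k L]

lemma lie_mem_range_id_sub {f : L →ₗ[k] L} (hf : ∀ x y, f ⁅x, y⁆ = ⁅f x, f y⁆) {z v : L}
    (hz : z ∈ range (id - f)) (hv : f v = v) : ⁅z, v⁆ ∈ range (id - f) := by
  obtain ⟨u, rfl⟩ := hz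
  exact ⟨⁅u, v⁆, by rw [sub_apply, sub_apply, id_apply, id_apply, sub_lie, hf, hv]⟩

end LinearMap

namespace Representation

variable {k G L : Type*} [CommRing k] [Group G] [LieRing L] [LieAlgebra k L]
  (ρ : Representation k G L)

lemma lie_mem_invariants (hρ : ∀ g x y, ρ g ⁅x, y⁆ = ⁅ρ g x, ρ g y⁆) {x y : L}
    (hx : x ∈ ρ.invariants) (hy : y ∈ ρ.invariants) : ⁅x, y⁆ ∈ ρ.invariants := fun g => by
  rw [hρ, hx g, hy g]

variable [Fintype G]

lemma lie_norm_apply_left {x y : L} (hxy : ∀ g ≠ 1, ⁅ρ g x, y⁆ = 0) :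
    ⁅ρ.norm x, y⁆ = ⁅x, y⁆ := by
  rw [norm, LinearMap.sum_apply, sum_lie, Finset.sum_eq_single_of_mem 1 (Finset.mem_univ _)
    fun g _ hg => hxy g hg, map_one, Module.End.one_apply]

lemma lie_mem_range_id_sub {γ : G} (hγ : ∀ x y, ρ γ ⁅x, y⁆ = ⁅ρ γ x, ρ γ y⁆) {x y : L}
    (hy : y ∈ LinearMap.range (LinearMap.id - ρ γ)) (hxy : ∀ g ≠ 1, ⁅ρ g x, y⁆ = 0) :
    ⁅x, y⁆ ∈ LinearMap.range (LinearMap.id - ρ γ) := by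
  rw [← lie_norm_apply_left ρ hxy, ← lie_skew]
  exact neg_mem (LinearMap.lie_mem_range_id_sub hγ hy (self_norm_apply ρ γ x))

end Representation

/-- for a γ-abelian action of a cyclic group `G = ⟨γ⟩` of order `n`
invertible in `k` on a Lie algebra `h`, the map `(g, x) ↦ g + x` is an isomorphism
of Lie algebras from the semidirect product `h^G ⋊ h_γ` (with right action
`x ⇀ g = [x, g]`) onto `h`. -/
theorem stmt9 (k : Type*) [Field k] (h : Type*) [LieRing h] [LieAlgebra k h]
    (G : Type*) [Group G] [Fintype G] (γ : G) (n : ℕ)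
    (hgen : ∀ x : G, x ∈ Subgroup.zpowers γ) (hord : orderOf γ = n)
    (hn : IsUnit ((n : k)))
    (φ : G →* (h ≃ₗ[k] h))
    (hLie : ∀ g : G, ∀ x y : h, φ g ⁅x, y⁆ = ⁅φ g x, φ g y⁆)
    (hab : ∀ g g' : G, g ≠ g' →
      ∀ z z' : h, (∃ y : h, z = y - φ γ y) → (∃ y : h, z' = y - φ γ y) →
        ⁅φ g z, φ g' z'⁆ = 0)
    (HG HΓ : Submodule k h)
    (hHG : (HG : Set h) = {x : h | ∀ g : G, φ g x = x})
    (hHΓ : (HΓ : Set h) = {z : h | ∃ y : h, z = y - φ γ y}) :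
    ∃ e : (HG × HΓ) ≃ₗ[k] h,
      (∀ p : HG × HΓ, e p = (p.1 : h) + (p.2 : h)) ∧
      (∀ (a b : HG) (x y : HΓ),
        -- the bracket of `h` corresponds to the semidirect product bracket
        ⁅(a : h) + (x : h), (b : h) + (y : h)⁆ =
          (⁅(a : h), (b : h)⁆ +
            (⁅(x : h), (y : h)⁆ + ⁅(x : h), (b : h)⁆ - ⁅(y : h), (a : h)⁆)) ∧
        ⁅(a : h), (b : h)⁆ ∈ HG ∧
        (⁅(x : h), (y : h)⁆ + ⁅(x : h), (b : h)⁆ - ⁅(y : h), (a : h)⁆) ∈ HΓ) := by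
  let ρ : Representation k G h := LinearEquiv.automorphismGroup.toLinearMapMonoidHom.comp φ
  obtain rfl : HG = ρ.invariants := SetLike.coe_injective hHG
  obtain rfl : HΓ = LinearMap.range (LinearMap.id - ρ γ) :=
    SetLike.coe_injective (hHΓ.trans (Set.ext fun z => exists_congr fun y => eq_comm))
  have hcard : (Fintype.card G : k) = n := by
    rw [← hord, orderOf_eq_card_of_forall_mem_zpowers hgen, Nat.card_eq_fintype_card]
  have : Invertible (Fintype.card G : k) := (hcard ▸ hn).invertible
  have hcompl := Representation.FiniteCyclicGroup.isCompl_invariants_range_id_sub ρ γ hgen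
  refine ⟨Submodule.prodEquivOfIsCompl _ _ hcompl, fun _ => rfl, fun a b x y => ⟨?_, ?_, ?_⟩⟩
  · rw [add_lie, lie_add, lie_add, ← lie_skew y.1 a.1]
    abel
  · exact ρ.lie_mem_invariants hLie a.2 b.2
  · have hxy : ∀ g ≠ 1, ⁅ρ g x, (y : h)⁆ = 0 := fun g hg => by
      obtain ⟨u, hu⟩ := x.2
      obtain ⟨v, hv⟩ := y.2
      simpa [ρ] using hab g 1 hg x y ⟨u, hu.symm⟩ ⟨v, hv.symm⟩
    refine sub_mem (add_mem ?_ ?_) ?_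
    · exact ρ.lie_mem_range_id_sub (hLie γ) y.2 hxy
    · exact LinearMap.lie_mem_range_id_sub (hLie γ) x.2 (b.2 γ)
    · exact LinearMap.lie_mem_range_id_sub (hLie γ) y.2 (a.2 γ)
end

section
/- Let g ⋊ h be the semidirect product of Lie algebras associated to a right action ↼: h × g → h, with g abelian and h perfect (h = [h,h]). Then Gal(g ⋊ h / g) is isomorphic to the group of Lie algebra automorphisms of h that are also right g-module maps, i.e., {u ∈ Aut_Lie(h) | u(x ↼ g) = u(x) ↼ g for all g ∈ g, x ∈ h}. -/
/-!
Writing `L = g ⊕ H`, abelianness of `g` gives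
`⁅a + m, b + n⁆ = ⁅m, b⁆ - ⁅n, a⁆ + ⁅m, n⁆`, so every bracket lies in `H`; as `H` is perfect,
`H` is the derived algebra of `L` and is therefore preserved by every automorphism, which makes
restriction to `H` well defined. Conversely, the same formula shows that `id_g ⊕ u` preserves
brackets as soon as `u` respects the bracket of `H` and the action of `g`, and these two
constructions are mutually inverse.
-/

namespace Submodule

variable {R E : Type*} [Ring R] [AddCommGroup E] [Module R E] {p q : Submodule R E}

noncomputable def extendOfIsCompl (h : IsCompl p q) (u : q ≃ₗ[R] q) : E ≃ₗ[R] E :=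
  (prodEquivOfIsCompl p q h).symm ≪≫ₗ (LinearEquiv.refl R p).prodCongr u ≪≫ₗ
    prodEquivOfIsCompl p q h

theorem extendOfIsCompl_apply_add (h : IsCompl p q) (u : q ≃ₗ[R] q) (a : p) (m : q) :
    extendOfIsCompl h u (a + m) = a + u m := by
  have : (a : E) + m = prodEquivOfIsCompl p q h (a, m) := rfl
  rw [this, extendOfIsCompl, LinearEquiv.trans_apply, LinearEquiv.trans_apply,
    LinearEquiv.symm_apply_apply, LinearEquiv.prodCongr_apply]
  rfl

theorem extendOfIsCompl_apply_left (h : IsCompl p q) (u : q ≃ₗ[R] q) (a : p) :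
    extendOfIsCompl h u a = a := by
  simpa using extendOfIsCompl_apply_add h u a 0

theorem extendOfIsCompl_apply_right (h : IsCompl p q) (u : q ≃ₗ[R] q) (m : q) :
    extendOfIsCompl h u m = u m := by
  simpa using extendOfIsCompl_apply_add h u 0 m

end Submodule

theorem lie_add_add_of_lie_eq_zero {L : Type*} [LieRing L] {a b : L} (m n : L)
    (hab : ⁅a, b⁆ = 0) : ⁅a + m, b + n⁆ = ⁅m, b⁆ - ⁅n, a⁆ + ⁅m, n⁆ := by
  rw [add_lie, lie_add, lie_add, hab, ← lie_skew a n]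
  abel

section SemidirectGalois

variable {k L : Type*} [CommRing k] [LieRing L] [LieAlgebra k L]
  {g : LieSubalgebra k L} {H : LieIdeal k L}

theorem lie_mem_of_isCompl (hcompl : IsCompl g.toSubmodule H.toSubmodule)
    (habelian : ∀ a ∈ g, ∀ b ∈ g, ⁅a, b⁆ = (0 : L)) (x y : L) : ⁅x, y⁆ ∈ H := by
  obtain ⟨a, m, ha, hm, rfl⟩ := Submodule.codisjoint_iff_exists_add_eq.mp hcompl.codisjoint x
  obtain ⟨b, n, hb, hn, rfl⟩ := Submodule.codisjoint_iff_exists_add_eq.mp hcompl.codisjoint y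
  rw [lie_add_add_of_lie_eq_zero m n (habelian a ha b hb)]
  exact add_mem (sub_mem (lie_mem_left k L H m b hm) (lie_mem_left k L H n a hn))
    (lie_mem_left k L H m n hm)

theorem map_mem_of_lie_mem (hperfect : ⁅H, H⁆ = H) (hder : ∀ x y : L, ⁅x, y⁆ ∈ H)
    (σ : L →ₗ[k] L) (hσ : ∀ x y : L, σ ⁅x, y⁆ = ⁅σ x, σ y⁆) {x : L} (hx : x ∈ H) :
    σ x ∈ H := by
  rw [← hperfect, ← LieSubmodule.mem_toSubmodule,
    LieSubmodule.lieIdeal_oper_eq_linear_span] at hx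
  refine Submodule.span_induction ?_ ?_ ?_ ?_ hx
  · rintro _ ⟨p, n, rfl⟩
    rw [hσ]
    exact hder _ _
  · simp
  · intro y z _ _ hy hz
    rw [map_add]
    exact add_mem hy hz
  · intro c y _ hy
    rw [map_smul]
    exact H.smul_mem c hy

theorem map_eq_of_lie_mem (hperfect : ⁅H, H⁆ = H) (hder : ∀ x y : L, ⁅x, y⁆ ∈ H)
    (σ : L ≃ₗ[k] L) (hσ : ∀ x y : L, σ ⁅x, y⁆ = ⁅σ x, σ y⁆) :
    H.toSubmodule.map (σ : L →ₗ[k] L) = H.toSubmodule := by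
  have hσsymm (x y : L) : σ.symm ⁅x, y⁆ = ⁅σ.symm x, σ.symm y⁆ :=
    σ.injective (by simp [hσ])
  refine le_antisymm ?_ fun x hx => ⟨σ.symm x, ?_, σ.apply_symm_apply x⟩
  · rintro _ ⟨x, hx, rfl⟩
    exact map_mem_of_lie_mem hperfect hder σ.toLinearMap hσ hx
  · exact map_mem_of_lie_mem hperfect hder σ.symm.toLinearMap hσsymm hx

variable (g) in
/-- `Gal(L/g)`. -/
abbrev LieGal :=
  {σ : L ≃ₗ[k] L // (∀ x y : L, σ ⁅x, y⁆ = ⁅σ x, σ y⁆) ∧ ∀ a ∈ g, σ a = a}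

variable (g H) in
abbrev EquivariantLieAut :=
  {u : H ≃ₗ[k] H //
    (∀ x y z : H, (z : L) = ⁅(x : L), (y : L)⁆ → (u z : L) = ⁅(u x : L), (u y : L)⁆) ∧
    (∀ a ∈ g, ∀ x y : H, (y : L) = ⁅(x : L), a⁆ → (u y : L) = ⁅(u x : L), a⁆)}

theorem extendOfIsCompl_lie (hcompl : IsCompl g.toSubmodule H.toSubmodule)
    (habelian : ∀ a ∈ g, ∀ b ∈ g, ⁅a, b⁆ = (0 : L)) (u : EquivariantLieAut g H) (x y : L) :
    Submodule.extendOfIsCompl hcompl u.1 ⁅x, y⁆ =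
      ⁅Submodule.extendOfIsCompl hcompl u.1 x, Submodule.extendOfIsCompl hcompl u.1 y⁆ := by
  obtain ⟨u, hu_lie, hu_act⟩ := u
  set σ := Submodule.extendOfIsCompl hcompl u
  have hder := lie_mem_of_isCompl hcompl habelian
  have hσH {z : L} (hz : z ∈ H) : σ z = u ⟨z, hz⟩ :=
    Submodule.extendOfIsCompl_apply_right hcompl u ⟨z, hz⟩
  obtain ⟨⟨⟨a, ha⟩, m⟩, rfl⟩ := (Submodule.prodEquivOfIsCompl _ _ hcompl).surjective x
  obtain ⟨⟨⟨b, hb⟩, n⟩, rfl⟩ := (Submodule.prodEquivOfIsCompl _ _ hcompl).surjective y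
  change σ ⁅a + m, b + n⁆ = ⁅σ (a + m), σ (b + n)⁆
  rw [Submodule.extendOfIsCompl_apply_add hcompl u ⟨a, ha⟩ m,
    Submodule.extendOfIsCompl_apply_add hcompl u ⟨b, hb⟩ n,
    lie_add_add_of_lie_eq_zero _ _ (habelian a ha b hb),
    lie_add_add_of_lie_eq_zero _ _ (habelian a ha b hb), map_add, map_sub,
    hσH (hder m b), hσH (hder n a), hσH (hder m n), hu_act b hb m ⟨_, hder m b⟩ rfl,
    hu_act a ha n ⟨_, hder n a⟩ rfl, hu_lie m n ⟨_, hder m n⟩ rfl]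

variable (g H) in
def LieGal.restrict (hperfect : ⁅H, H⁆ = H) (hder : ∀ x y : L, ⁅x, y⁆ ∈ H) (σ : LieGal g) :
    EquivariantLieAut g H :=
  ⟨σ.1.ofSubmodules H.toSubmodule H.toSubmodule (map_eq_of_lie_mem hperfect hder σ.1 σ.2.1),
    fun x y z hz => show σ.1 z = ⁅σ.1 x, σ.1 y⁆ by rw [hz, σ.2.1],
    fun a ha x y hy => show σ.1 y = ⁅σ.1 x, a⁆ by rw [hy, σ.2.1, σ.2.2 a ha]⟩

noncomputable def EquivariantLieAut.extend (hcompl : IsCompl g.toSubmodule H.toSubmodule)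
    (habelian : ∀ a ∈ g, ∀ b ∈ g, ⁅a, b⁆ = (0 : L)) (u : EquivariantLieAut g H) : LieGal g :=
  ⟨Submodule.extendOfIsCompl hcompl u.1, extendOfIsCompl_lie hcompl habelian u,
    fun a ha => Submodule.extendOfIsCompl_apply_left hcompl u.1 ⟨a, ha⟩⟩

theorem LieGal.restrict_val_eq_mul (hperfect : ⁅H, H⁆ = H) (hder : ∀ x y : L, ⁅x, y⁆ ∈ H)
    {σ τ ρ : LieGal g} (h : ρ.1 = σ.1 * τ.1) :
    (ρ.restrict g H hperfect hder).1 =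
      (σ.restrict g H hperfect hder).1 * (τ.restrict g H hperfect hder).1 :=
  LinearEquiv.ext fun m => Subtype.ext <| LinearEquiv.congr_fun h m

noncomputable def lieGalEquiv (hcompl : IsCompl g.toSubmodule H.toSubmodule)
    (habelian : ∀ a ∈ g, ∀ b ∈ g, ⁅a, b⁆ = (0 : L)) (hperfect : ⁅H, H⁆ = H) :
    LieGal g ≃ EquivariantLieAut g H where
  toFun := LieGal.restrict g H hperfect (lie_mem_of_isCompl hcompl habelian)
  invFun := EquivariantLieAut.extend hcompl habelian
  left_inv σ := Subtype.ext <| LinearEquiv.ext fun x => by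
    obtain ⟨⟨a, m⟩, rfl⟩ := (Submodule.prodEquivOfIsCompl _ _ hcompl).surjective x
    change Submodule.extendOfIsCompl hcompl _ (a + m) = σ.1 (a + m)
    rw [Submodule.extendOfIsCompl_apply_add, map_add, σ.2.2 a a.2]
    rfl
  right_inv u := Subtype.ext <| LinearEquiv.ext fun m =>
    Subtype.ext <| Submodule.extendOfIsCompl_apply_right hcompl u.1 m

end SemidirectGalois

/-- for a semidirect product `L = g ⋊ h` of Lie algebras (formulated
internally: `g` an abelian subalgebra, `H` a perfect ideal, complementary as
submodules), `Gal(L/g)` is isomorphic to the group of automorphisms of `H` that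
commute with the action `x ↼ a = [x, a]` of `g`. -/
theorem stmt15 (k : Type*) [Field k] (L : Type*) [LieRing L] [LieAlgebra k L]
    (g : LieSubalgebra k L) (H : LieIdeal k L)
    (hcompl : IsCompl g.toSubmodule H.toSubmodule)
    (habelian : ∀ a ∈ g, ∀ b ∈ g, ⁅a, b⁆ = (0 : L))
    (hperfect : ⁅H, H⁆ = H) :
    ∃ F : {σ : L ≃ₗ[k] L // (∀ x y : L, σ ⁅x, y⁆ = ⁅σ x, σ y⁆) ∧ ∀ a ∈ g, σ a = a} ≃
          {u : H ≃ₗ[k] H //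
            (∀ x y z : H, (z : L) = ⁅(x : L), (y : L)⁆ →
              (u z : L) = ⁅(u x : L), (u y : L)⁆) ∧
            (∀ a ∈ g, ∀ x y : H, (y : L) = ⁅(x : L), a⁆ →
              (u y : L) = ⁅(u x : L), a⁆)},
      ∀ σ τ ρ : {σ : L ≃ₗ[k] L // (∀ x y : L, σ ⁅x, y⁆ = ⁅σ x, σ y⁆) ∧ ∀ a ∈ g, σ a = a},
        ρ.val = σ.val * τ.val → (F ρ).val = (F σ).val * (F τ).val :=
  ⟨lieGalEquiv hcompl habelian hperfect, fun _ _ _ =>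
    LieGal.restrict_val_eq_mul hperfect (lie_mem_of_isCompl hcompl habelian)⟩
end

section
/- Let g be a complete Lie algebra (trivial center and all derivations inner) and H(g) = g × Der(g) its holomorph with bracket [(g,φ),(h,ψ)] = ([g,h] + φ(h) - ψ(g), [φ,ψ]). Then Gal(H(g)/g) ≅ Aut_Lie(g): every automorphism of H(g) fixing g × {0} is determined by a Lie algebra automorphism τ of g via ad_x ↦ (x - τ(x), ad_{τ(x)}). -/
/-! For complete `g`, the map `(a, ad x) ↦ (a + x, x)` is a Lie isomorphism from the holomorph
onto the direct product `g × g`, sending `g × 0` onto the first factor. An automorphism of `g × g`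
fixing the first factor pointwise preserves its centralizer `0 × g`, because the centre of `g` is
trivial; hence it is `id × τ` for a Lie automorphism `τ` of `g`, and every such `id × τ` fixes the
first factor. Transporting back, `(0, ad x)`, which corresponds to `(x, x)`, is sent to the
element corresponding to `(x, τ x)`, namely `(x - τ x, ad (τ x))`. -/

section Automorphisms

variable (R : Type*) [CommRing R]

def lieAutomorphisms (L : Type*) [LieRing L] [LieAlgebra R L] : Subgroup (L ≃ₗ[R] L) where
  carrier := {σ | ∀ x y : L, σ ⁅x, y⁆ = ⁅σ x, σ y⁆}
  mul_mem' {σ τ} hσ hτ x y := by rw [LinearEquiv.mul_apply, hτ x y, hσ]; rfl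
  one_mem' _ _ := rfl
  inv_mem' {σ} hσ x y := σ.injective (by simp [hσ _ _])

def fixingLinearAutomorphisms {M ι : Type*} [AddCommGroup M] [Module R M] (i : ι → M) :
    Subgroup (M ≃ₗ[R] M) where
  carrier := {σ | ∀ a, σ (i a) = i a}
  mul_mem' {σ τ} hσ hτ a := by rw [LinearEquiv.mul_apply, hτ a, hσ a]
  one_mem' _ := rfl
  inv_mem' {σ} hσ a := σ.injective (by simp [hσ a])

variable {R} {L L' ι : Type*} [LieRing L] [LieAlgebra R L] [LieRing L'] [LieAlgebra R L']

variable (R) in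
abbrev lieAutomorphismsFixing (i : ι → L) : Subgroup (L ≃ₗ[R] L) :=
  lieAutomorphisms R L ⊓ fixingLinearAutomorphisms R i

def lieAutomorphismsFixingCongr (Φ : L ≃ₗ⁅R⁆ L') {i : ι → L} {i' : ι → L'}
    (hi : ∀ a, Φ (i a) = i' a) :
    lieAutomorphismsFixing R i ≃* lieAutomorphismsFixing R i' where
  toFun σ := ⟨Φ.symm.toLinearEquiv.trans (σ.1.trans Φ.toLinearEquiv),
    fun x y => by simp [LieEquiv.map_lie, σ.2.1 _ _], fun a => by simp [← hi, σ.2.2 a]⟩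
  invFun ρ := ⟨Φ.toLinearEquiv.trans (ρ.1.trans Φ.symm.toLinearEquiv),
    fun x y => by simp [LieEquiv.map_lie, ρ.2.1 _ _],
    fun a => by simp [hi, ρ.2.2 a, LieEquiv.symm_apply_eq]⟩
  left_inv σ := by ext; simp
  right_inv ρ := by ext; simp
  map_mul' σ τ := by ext; simp

theorem lieAutomorphismsFixingCongr_apply (Φ : L ≃ₗ⁅R⁆ L') {i : ι → L} {i' : ι → L'}
    (hi : ∀ a, Φ (i a) = i' a) (σ : lieAutomorphismsFixing R i) (q : L') :
    (lieAutomorphismsFixingCongr Φ hi σ).1 q = Φ (σ.1 (Φ.symm q)) := rfl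

end Automorphisms

section Product

variable {R g h : Type*} [CommRing R] [LieRing g] [LieAlgebra R g] [LieRing h] [LieAlgebra R h]

theorem fst_apply_zero_prod_eq_zero (hcenter : LieAlgebra.center R g = ⊥)
    (σ : lieAutomorphismsFixing R (fun a : g => ((a, 0) : g × h))) (y : h) :
    (σ.1 (0, y)).1 = 0 := by
  have hmem : (σ.1 (0, y)).1 ∈ LieAlgebra.center R g := by
    rw [LieAlgebra.center, LieModule.mem_maxTrivSubmodule]
    intro a
    have h := σ.2.1 (a, 0) (0, y)
    rw [σ.2.2 a] at h
    simpa [Prod.mk_zero_zero] using (congrArg Prod.fst h).symm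
  simpa [hcenter] using hmem

theorem apply_eq_mk_snd_apply_zero_prod (hcenter : LieAlgebra.center R g = ⊥)
    (σ : lieAutomorphismsFixing R (fun a : g => ((a, 0) : g × h))) (p : g × h) :
    σ.1 p = (p.1, (σ.1 (0, p.2)).2) := by
  have h := map_add σ.1 (p.1, 0) (0, p.2)
  rw [Prod.mk_add_mk, add_zero, zero_add, σ.2.2] at h
  rw [h]
  ext
  · simp [fst_apply_zero_prod_eq_zero hcenter]
  · simp

def sndRestrictHom (hcenter : LieAlgebra.center R g = ⊥) :
    lieAutomorphismsFixing R (fun a : g => ((a, 0) : g × h)) →* Module.End R h where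
  toFun σ := LinearMap.snd R g h ∘ₗ σ.1.toLinearMap ∘ₗ LinearMap.inr R g h
  map_one' := rfl
  map_mul' σ τ := LinearMap.ext fun y => by
    simp [apply_eq_mk_snd_apply_zero_prod hcenter σ (τ.1 (0, y))]

theorem sndRestrictHom_apply (hcenter : LieAlgebra.center R g = ⊥)
    (σ : lieAutomorphismsFixing R (fun a : g => ((a, 0) : g × h))) (y : h) :
    sndRestrictHom hcenter σ y = (σ.1 (0, y)).2 := rfl

def lieAutomorphismsFixingProdEquiv (hcenter : LieAlgebra.center R g = ⊥) :
    lieAutomorphismsFixing R (fun a : g => ((a, 0) : g × h)) ≃* lieAutomorphisms R h where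
  toFun σ := ⟨LinearEquiv.ofLinearMap (sndRestrictHom hcenter σ) (sndRestrictHom hcenter σ⁻¹)
      (by rw [← Module.End.mul_eq_comp, ← map_mul, mul_inv_cancel, map_one]; rfl)
      (by rw [← Module.End.mul_eq_comp, ← map_mul, inv_mul_cancel, map_one]; rfl),
    fun x y => by
      simpa [sndRestrictHom_apply] using congrArg Prod.snd (σ.2.1 (0, x) (0, y))⟩
  invFun τ := ⟨LinearEquiv.prodCongr (LinearEquiv.refl R g) τ.1,
    fun p q => by simp [τ.2 _ _], fun a => by simp⟩
  left_inv σ := Subtype.ext <| LinearEquiv.ext fun p =>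
    (apply_eq_mk_snd_apply_zero_prod hcenter σ p).symm
  right_inv τ := rfl
  map_mul' σ τ := Subtype.ext <| LinearEquiv.toLinearMap_injective (map_mul _ σ τ)

end Product

section Holomorph

open LieDerivation

variable {R g Hol : Type*} [CommRing R] [LieRing g] [LieAlgebra R g] [LieRing Hol]
  [LieAlgebra R Hol] (hcenter : LieAlgebra.center R g = ⊥) (hsurj : Function.Surjective (ad R g))

noncomputable def adEquiv : g ≃ₗ⁅R⁆ LieDerivation R g g :=
  LieEquiv.ofBijective (ad R g) ⟨injective_ad_of_center_eq_bot hcenter, hsurj⟩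

theorem adEquiv_symm_ad (x : g) : (adEquiv hcenter hsurj).symm (ad R g x) = x :=
  (adEquiv hcenter hsurj).symm_apply_apply x

theorem ad_adEquiv_symm (D : LieDerivation R g g) : ad R g ((adEquiv hcenter hsurj).symm D) = D :=
  (adEquiv hcenter hsurj).apply_symm_apply D

variable (E : Hol ≃ₗ[R] (g × LieDerivation R g g))
  (hbr : ∀ p q : Hol,
    E ⁅p, q⁆ = (⁅(E p).1, (E q).1⁆ + (E p).2 ((E q).1) - (E q).2 ((E p).1), ⁅(E p).2, (E q).2⁆))

noncomputable def holomorphEquivProd : Hol ≃ₗ⁅R⁆ g × g where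
  toFun p := ((E p).1 + (adEquiv hcenter hsurj).symm (E p).2, (adEquiv hcenter hsurj).symm (E p).2)
  invFun q := E.symm (q.1 - q.2, ad R g q.2)
  map_add' p q := by simp only [map_add, Prod.fst_add, Prod.snd_add, Prod.mk_add_mk]; abel_nf
  map_smul' c p := by simp
  map_lie' {p q} := by
    obtain ⟨x, hx⟩ := hsurj (E p).2
    obtain ⟨y, hy⟩ := hsurj (E q).2
    simp only [hbr, ← hx, ← hy, ← LieHom.map_lie, adEquiv_symm_ad, ad_apply_apply,
      LieAlgebra.Prod.bracket_apply, lie_add, add_lie, Prod.mk.injEq, and_true]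
    rw [← lie_skew y]
    abel
  left_inv p := by
    change E.symm ((E p).1 + (adEquiv hcenter hsurj).symm (E p).2 -
      (adEquiv hcenter hsurj).symm (E p).2, ad R g ((adEquiv hcenter hsurj).symm (E p).2)) = p
    rw [add_sub_cancel_right, ad_adEquiv_symm, Prod.mk.eta, E.symm_apply_apply]
  right_inv q := by simp [adEquiv_symm_ad]

theorem holomorphEquivProd_apply_symm (a x : g) :
    holomorphEquivProd hcenter hsurj E hbr (E.symm (a, ad R g x)) = (a + x, x) := by
  change ((E (E.symm _)).1 + _, _) = _
  simp [adEquiv_symm_ad]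

theorem holomorphEquivProd_symm_apply (c x : g) :
    (holomorphEquivProd hcenter hsurj E hbr).symm (c, x) = E.symm (c - x, ad R g x) := rfl

theorem holomorphEquivProd_apply_symm_zero (a : g) :
    holomorphEquivProd hcenter hsurj E hbr (E.symm (a, 0)) = (a, 0) := by
  simpa using holomorphEquivProd_apply_symm hcenter hsurj E hbr a 0

noncomputable def holomorphGaloisEquiv :
    lieAutomorphismsFixing R (fun a : g => E.symm (a, 0)) ≃* lieAutomorphisms R g :=
  (lieAutomorphismsFixingCongr _ (holomorphEquivProd_apply_symm_zero hcenter hsurj E hbr)).trans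
    (lieAutomorphismsFixingProdEquiv hcenter)

theorem holomorphGaloisEquiv_apply_symm_zero_ad
    (σ : lieAutomorphismsFixing R (fun a : g => E.symm (a, 0))) (x : g) :
    σ.1 (E.symm (0, ad R g x)) =
      E.symm (x - (holomorphGaloisEquiv hcenter hsurj E hbr σ).1 x,
        ad R g ((holomorphGaloisEquiv hcenter hsurj E hbr σ).1 x)) := by
  set Φ := holomorphEquivProd hcenter hsurj E hbr
  set ρ := lieAutomorphismsFixingCongr Φ (holomorphEquivProd_apply_symm_zero hcenter hsurj E hbr) σ
  have hΦ : Φ (E.symm (0, ad R g x)) = (x, x) := by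
    rw [holomorphEquivProd_apply_symm, zero_add]
  have hσ : σ.1 (E.symm (0, ad R g x)) = Φ.symm (ρ.1 (x, x)) := by
    rw [lieAutomorphismsFixingCongr_apply, ← hΦ, LieEquiv.symm_apply_apply,
      LieEquiv.symm_apply_apply]
  rw [hσ, apply_eq_mk_snd_apply_zero_prod hcenter ρ, holomorphEquivProd_symm_apply]
  rfl

end Holomorph

/-- for a complete Lie algebra `g` (trivial center, all derivations
inner) and its holomorph `H(g) = g × Der(g)` with bracket
`[(g,φ),(h,ψ)] = ([g,h] + φ(h) - ψ(g), [φ,ψ])`, one has `Gal(H(g)/g) ≅ Aut_Lie(g)`,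
every automorphism of `H(g)` fixing `g` being given by
`ad_x ↦ (x - τ(x), ad_{τ(x)})` for a Lie algebra automorphism `τ` of `g`. -/
theorem stmt17 (k : Type*) [Field k] (g : Type*) [LieRing g] [LieAlgebra k g]
    (hZ : ∀ x : g, (∀ y : g, ⁅x, y⁆ = 0) → x = 0)
    (hInner : ∀ D : LieDerivation k g g, ∃ x : g, ∀ y : g, D y = ⁅x, y⁆)
    (Hol : Type*) [LieRing Hol] [LieAlgebra k Hol]
    (E : Hol ≃ₗ[k] (g × LieDerivation k g g))
    (hbr : ∀ p q : Hol,
      E ⁅p, q⁆ = (⁅(E p).1, (E q).1⁆ + (E p).2 ((E q).1) - (E q).2 ((E p).1),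
                   ⁅(E p).2, (E q).2⁆)) :
    ∃ F : {σ : Hol ≃ₗ[k] Hol // (∀ x y : Hol, σ ⁅x, y⁆ = ⁅σ x, σ y⁆) ∧
            ∀ a : g, σ (E.symm (a, 0)) = E.symm (a, 0)} ≃
          {τ : g ≃ₗ[k] g // ∀ x y : g, τ ⁅x, y⁆ = ⁅τ x, τ y⁆},
      (∀ σ τ ρ : {σ : Hol ≃ₗ[k] Hol // (∀ x y : Hol, σ ⁅x, y⁆ = ⁅σ x, σ y⁆) ∧
            ∀ a : g, σ (E.symm (a, 0)) = E.symm (a, 0)},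
        ρ.val = σ.val * τ.val → (F ρ).val = (F σ).val * (F τ).val) ∧
      (∀ σ : {σ : Hol ≃ₗ[k] Hol // (∀ x y : Hol, σ ⁅x, y⁆ = ⁅σ x, σ y⁆) ∧
            ∀ a : g, σ (E.symm (a, 0)) = E.symm (a, 0)},
        ∀ x : g, ∀ D D' : LieDerivation k g g,
          (∀ y : g, D y = ⁅x, y⁆) → (∀ y : g, D' y = ⁅(F σ).val x, y⁆) →
          σ.val (E.symm (0, D)) = E.symm (x - (F σ).val x, D')) := by
  have hcenter : LieAlgebra.center k g = ⊥ := by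
    refine (LieSubmodule.eq_bot_iff _).2 fun x hx => hZ x fun y => ?_
    rw [← lie_skew, (LieModule.mem_maxTrivSubmodule k g g x).1 hx y, neg_zero]
  have hsurj : Function.Surjective (LieDerivation.ad k g) := fun D =>
    let ⟨x, hx⟩ := hInner D
    ⟨x, by ext y; simp [hx]⟩
  set F := holomorphGaloisEquiv hcenter hsurj E hbr
  refine ⟨F.toEquiv, fun (σ τ ρ : lieAutomorphismsFixing k fun a : g => E.symm (a, 0)) hρ => ?_,
    fun (σ : lieAutomorphismsFixing k fun a : g => E.symm (a, 0)) x D D' hD hD' => ?_⟩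
  · rw [show ρ = σ * τ from Subtype.ext hρ]
    exact congrArg Subtype.val (map_mul F σ τ)
  · obtain rfl : D = LieDerivation.ad k g x := LieDerivation.ext fun y =>
      (hD y).trans (LieDerivation.ad_apply_apply k g x y).symm
    obtain rfl : D' = LieDerivation.ad k g ((F σ).1 x) := LieDerivation.ext fun y =>
      (hD' y).trans (LieDerivation.ad_apply_apply k g _ y).symm
    exact holomorphGaloisEquiv_apply_symm_zero_ad hcenter hsurj E hbr σ x
end

section
/- Let g be a Lie algebra and Δ ∈ Der(g) a derivation that is not inner, and let g_{(Δ)} = g × k with bracket [(x,a),(y,b)] = ([x,y] + bΔ(x) - aΔ(y), 0). Then Gal(g_{(Δ)}/g) is isomorphic to the additive group of the center Z(g): every automorphism of g_{(Δ)} fixing g pointwise has the form (x, a) ↦ (x + a z, a) for a unique z ∈ Z(g). -/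
/-!
An automorphism `σ` fixing `g` is determined by `σ (0, 1) = (z, c)`. Applying `σ` to
`⁅(0, 1), (y, 0)⁆ = (-Δ y, 0)` gives `ad z = (c - 1) • Δ`, so non-innerness of `Δ` forces
`c = 1`, whence `z` is central and `σ (x, a) = (x + a • z, a)`. Conversely, for central `z` this
map is the transvection `p ↦ p + a • (z, 0)` of `g_{(Δ)}`, and it preserves the bracket because
the two terms `± a b • Δ z` it creates cancel.
-/

section

variable {k g L : Type*} [Field k] [LieRing g] [LieAlgebra k g] [LieRing L] [LieAlgebra k L]

/-- `E` identifies `L` with `g_{(Δ)}`. -/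
def IsExtensionByDerivation (Δ : g →ₗ[k] g) (E : L ≃ₗ[k] g × k) : Prop :=
  ∀ p q : L, E ⁅p, q⁆ = (⁅(E p).1, (E q).1⁆ + (E q).2 • Δ (E p).1 - (E p).2 • Δ (E q).1, 0)

namespace IsExtensionByDerivation

variable {Δ : g →ₗ[k] g} {E : L ≃ₗ[k] g × k}

theorem lie_symm_symm (hE : IsExtensionByDerivation Δ E) (u v : g × k) :
    ⁅E.symm u, E.symm v⁆ = E.symm (⁅u.1, v.1⁆ + v.2 • Δ u.1 - u.2 • Δ v.1, 0) := by
  rw [E.eq_symm_apply, hE]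
  simp

end IsExtensionByDerivation

section Shear

variable (E : L ≃ₗ[k] g × k)

def extCoord : Module.Dual k L :=
  LinearMap.snd k g k ∘ₗ E.toLinearMap

theorem extCoord_symm_inl (z : g) : extCoord E (E.symm (z, 0)) = 0 := by
  simp [extCoord]

def shear (z : g) : L ≃ₗ[k] L :=
  LinearEquiv.transvection (extCoord_symm_inl E z)

theorem shear_apply (z : g) (p : L) : shear E z p = p + (E p).2 • E.symm (z, 0) :=
  LinearEquiv.transvection.apply _ p

theorem shear_symm_apply (z x : g) (a : k) :
    shear E z (E.symm (x, a)) = E.symm (x + a • z, a) := by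
  rw [shear_apply, E.apply_symm_apply, ← map_smul, ← map_add]
  simp

theorem shear_add (z w : g) : shear E (z + w) = shear E z * shear E w := by
  have hzw : E.symm (z + w, 0) = E.symm (z, 0) + E.symm (w, 0) := by
    rw [← map_add, Prod.mk_add_mk, add_zero]
  ext p
  simp only [LinearEquiv.mul_apply, shear_apply, map_add, map_smul, E.apply_symm_apply, hzw]
  rw [zero_smul, add_zero, smul_add, add_assoc]

theorem ext_of_forall_symm_apply {σ τ : L ≃ₗ[k] L}
    (h : ∀ (x : g) (a : k), σ (E.symm (x, a)) = τ (E.symm (x, a))) : σ = τ :=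
  LinearEquiv.ext fun p => by simpa using h (E p).1 (E p).2

end Shear

variable {Δ : g →ₗ[k] g} {E : L ≃ₗ[k] g × k}

theorem shear_map_lie (hE : IsExtensionByDerivation Δ E) {z : g} (hz : ∀ x : g, ⁅z, x⁆ = 0)
    (p q : L) : shear E z ⁅p, q⁆ = ⁅shear E z p, shear E z q⁆ := by
  have hz' : ∀ x : g, ⁅x, z⁆ = 0 := fun x => by rw [← lie_skew, hz, neg_zero]
  obtain ⟨⟨x, a⟩, rfl⟩ := E.symm.surjective p
  obtain ⟨⟨y, b⟩, rfl⟩ := E.symm.surjective q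
  simp only [hE.lie_symm_symm, shear_symm_apply, zero_smul, add_zero]
  congr 2
  simp only [lie_add, add_lie, smul_lie, lie_smul, hz, hz', map_add, map_smul, smul_add,
    smul_smul, smul_zero, add_zero]
  rw [mul_comm b a]
  abel

theorem lie_eq_smul_of_map_lie (hE : IsExtensionByDerivation Δ E) {σ : L ≃ₗ[k] L}
    (hσ : ∀ p q : L, σ ⁅p, q⁆ = ⁅σ p, σ q⁆) (hfix : ∀ x : g, σ (E.symm (x, 0)) = E.symm (x, 0))
    {z : g} {c : k} (hzc : σ (E.symm (0, 1)) = E.symm (z, c)) (y : g) :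
    ⁅z, y⁆ = (c - 1) • Δ y := by
  have h := hσ (E.symm (0, 1)) (E.symm (y, 0))
  rw [hE.lie_symm_symm, hzc, hfix y, hE.lie_symm_symm] at h
  simp only [zero_lie, zero_smul, map_zero, one_smul, zero_add, zero_sub, hfix] at h
  have h1 := congrArg Prod.fst (E.symm.injective h)
  rw [add_zero] at h1
  rw [sub_smul, one_smul]
  linear_combination (norm := module) -h1

theorem exists_central_eq_shear (hE : IsExtensionByDerivation Δ E)
    (hnotinner : ¬ ∃ δ : g, ∀ x : g, Δ x = ⁅δ, x⁆) {σ : L ≃ₗ[k] L}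
    (hσ : ∀ p q : L, σ ⁅p, q⁆ = ⁅σ p, σ q⁆) (hfix : ∀ x : g, σ (E.symm (x, 0)) = E.symm (x, 0)) :
    ∃ z : g, (∀ x : g, ⁅z, x⁆ = 0) ∧ σ = shear E z := by
  obtain ⟨⟨z, c⟩, hzc⟩ := E.symm.surjective (σ (E.symm (0, 1)))
  have hrel := lie_eq_smul_of_map_lie hE hσ hfix hzc.symm
  have hc : c = 1 := by
    by_contra hc
    refine hnotinner ⟨(c - 1)⁻¹ • z, fun y => ?_⟩
    rw [smul_lie, hrel, smul_smul, inv_mul_cancel₀ (sub_ne_zero.mpr hc), one_smul]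
  subst hc
  refine ⟨z, fun y => by rw [hrel, sub_self, zero_smul], ext_of_forall_symm_apply E fun x a => ?_⟩
  have hdecomp : E.symm (x, a) = E.symm (x, 0) + a • E.symm (0, 1) := by
    rw [← map_smul, ← map_add]
    simp
  rw [hdecomp, map_add, map_smul, hfix, ← hzc, map_add, map_smul, shear_symm_apply,
    shear_symm_apply]
  simp

end

theorem stmt19_general (k : Type*) [Field k] (g : Type*) [LieRing g] [LieAlgebra k g]
    (Δ : g →ₗ[k] g)
    (hnotinner : ¬ ∃ δ : g, ∀ x : g, Δ x = ⁅δ, x⁆)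
    (L : Type*) [LieRing L] [LieAlgebra k L] (E : L ≃ₗ[k] (g × k))
    (hbr : ∀ p q : L,
      E ⁅p, q⁆ = (⁅(E p).1, (E q).1⁆ + (E q).2 • Δ (E p).1 - (E p).2 • Δ (E q).1,
                   (0 : k))) :
    ∃ F : {z : g // ∀ x : g, ⁅z, x⁆ = 0} ≃
          {σ : L ≃ₗ[k] L // (∀ x y : L, σ ⁅x, y⁆ = ⁅σ x, σ y⁆) ∧
            ∀ x : g, σ (E.symm (x, 0)) = E.symm (x, 0)},
      -- `F` turns addition of central elements into composition of automorphisms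
      (∀ z w s : {z : g // ∀ x : g, ⁅z, x⁆ = 0},
        s.val = z.val + w.val → (F s).val = (F z).val * (F w).val) ∧
      -- explicit form of the automorphism attached to `z`
      (∀ z : {z : g // ∀ x : g, ⁅z, x⁆ = 0}, ∀ x : g, ∀ a : k,
        (F z).val (E.symm (x, a)) = E.symm (x + a • z.val, a)) := by
  let toGal (z : {z : g // ∀ x : g, ⁅z, x⁆ = 0}) :
      {σ : L ≃ₗ[k] L // (∀ x y : L, σ ⁅x, y⁆ = ⁅σ x, σ y⁆) ∧
        ∀ x : g, σ (E.symm (x, 0)) = E.symm (x, 0)} :=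
    ⟨shear E z, shear_map_lie hbr z.2, fun x => by simp [shear_symm_apply]⟩
  have injective : Function.Injective toGal := fun z w h => Subtype.ext <| by
    simpa [toGal, shear_symm_apply] using
      congrArg (fun σ : L ≃ₗ[k] L => σ (E.symm (0, 1))) (congrArg Subtype.val h)
  have surjective : Function.Surjective toGal := fun σ => by
    obtain ⟨z, hz, hσ⟩ := exists_central_eq_shear hbr hnotinner σ.2.1 σ.2.2
    exact ⟨⟨z, hz⟩, Subtype.ext hσ.symm⟩
  refine ⟨Equiv.ofBijective toGal ⟨injective, surjective⟩, fun z w s hs => ?_,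
    fun z => shear_symm_apply E z⟩
  change shear E s = shear E z * shear E w
  rw [hs, shear_add]

/-- for a non-inner derivation `Δ` of `g` and the codimension-1
extension `g_{(Δ)} = g × k` with bracket `[(x,a),(y,b)] = ([x,y] + bΔ(x) - aΔ(y), 0)`,
`Gal(g_{(Δ)}/g)` is isomorphic to the additive group of the center `Z(g)`: every
automorphism fixing `g` pointwise has the form `(x, a) ↦ (x + a z, a)` for a
unique central `z`. -/
theorem stmt19 (k : Type*) [Field k] (g : Type*) [LieRing g] [LieAlgebra k g]
    (Δ : g →ₗ[k] g) (hΔ : ∀ x y : g, Δ ⁅x, y⁆ = ⁅Δ x, y⁆ + ⁅x, Δ y⁆)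
    (hnotinner : ¬ ∃ δ : g, ∀ x : g, Δ x = ⁅δ, x⁆)
    (L : Type*) [LieRing L] [LieAlgebra k L] (E : L ≃ₗ[k] (g × k))
    (hbr : ∀ p q : L,
      E ⁅p, q⁆ = (⁅(E p).1, (E q).1⁆ + (E q).2 • Δ (E p).1 - (E p).2 • Δ (E q).1,
                   (0 : k))) :
    ∃ F : {z : g // ∀ x : g, ⁅z, x⁆ = 0} ≃
          {σ : L ≃ₗ[k] L // (∀ x y : L, σ ⁅x, y⁆ = ⁅σ x, σ y⁆) ∧
            ∀ x : g, σ (E.symm (x, 0)) = E.symm (x, 0)},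
      -- `F` turns addition of central elements into composition of automorphisms
      (∀ z w s : {z : g // ∀ x : g, ⁅z, x⁆ = 0},
        s.val = z.val + w.val → (F s).val = (F z).val * (F w).val) ∧
      -- explicit form of the automorphism attached to `z`
      (∀ z : {z : g // ∀ x : g, ⁅z, x⁆ = 0}, ∀ x : g, ∀ a : k,
        (F z).val (E.symm (x, a)) = E.symm (x + a • z.val, a)) :=
  stmt19_general k g Δ hnotinner L E hbr
end
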